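/- Let n ≥ 3 and suppose a simple connected graph G of order n realizes the multiset S_{{i,j},n}^m = ({0,1,...,n} \ {i,j}) with m doubled, where 0 < i < j ≤ n. Then the graph K₁ ∨ (K₁ ∪ G) on n+2 vertices realizes S_{{i+1,j+1},n+2}^{m+1}. -/

import Mathlib

open SimpleGraph Polynomial

/-- The multiset of Laplacian eigenvalues (roots of the characteristic polynomial of the
Laplacian matrix over `ℝ`, with multiplicity) of a simple graph. -/
noncomputable def lapSpec {V : Type*} [Fintype V] [DecidableEq V] (G : SimpleGraph V) :
    Multiset ℝ :=
  letI := Classical.decRel G.Adj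
  ((G.lapMatrix ℝ).charpoly).roots

/-- The disjoint union of two simple graphs. -/
def graphUnion {α β : Type*} (G : SimpleGraph α) (H : SimpleGraph β) : SimpleGraph (α ⊕ β) :=
  SimpleGraph.fromRel fun x y =>
    (∃ a b, x = Sum.inl a ∧ y = Sum.inl b ∧ G.Adj a b) ∨
    (∃ a b, x = Sum.inr a ∧ y = Sum.inr b ∧ H.Adj a b)

/-- The join of two simple graphs: the disjoint union together with all edges between the parts. -/
def graphJoin {α β : Type*} (G : SimpleGraph α) (H : SimpleGraph β) : SimpleGraph (α ⊕ β) :=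
  SimpleGraph.fromRel fun x y =>
    (∃ a b, x = Sum.inl a ∧ y = Sum.inl b ∧ G.Adj a b) ∨
    (∃ a b, x = Sum.inr a ∧ y = Sum.inr b ∧ H.Adj a b) ∨
    (∃ a b, x = Sum.inl a ∧ y = Sum.inr b)

/-- `G` is a join of two nonempty graphs. -/
def IsJoin {γ : Type*} [Fintype γ] (G : SimpleGraph γ) : Prop :=
  ∃ (p q : ℕ) (F : SimpleGraph (Fin p)) (H : SimpleGraph (Fin q)),
    0 < p ∧ 0 < q ∧ Nonempty (G ≃g graphJoin F H)

/-- The multiset `S_{{i,j},n}^m`: the integers `0,1,…,n` with `i` and `j` removed and an extra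
copy of `m` added (so `m` is counted twice), viewed as a multiset of reals. -/
def Sdouble (i j n m : ℕ) : Multiset ℝ :=
  ((m ::ₘ (((Finset.range (n + 1)).val.erase i).erase j)).map (fun k : ℕ => (k : ℝ)))

/-- The multiset `S_{j,n} = {0,1,…,n} \ {j}`, viewed as a multiset of reals. -/
def Ssingle (j n : ℕ) : Multiset ℝ :=
  (((Finset.range (n + 1)).val.erase j).map (fun k : ℕ => (k : ℝ)))

/-- The one-vertex graph `K₁`. -/
def K1 : SimpleGraph (Fin 1) := ⊥

/-- The complete graph `K₂` on two vertices. -/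
def K2 : SimpleGraph (Fin 2) := ⊤
/-!
Let `H` have `N` vertices. The Laplacian of `K₁ ∨ H` is `L_H + I` bordered by a vertex of
degree `N` adjacent to everything. As the rows of `L_H` sum to zero, one column operation on the
characteristic matrix gives `(x - 1) χ_{K₁ ∨ H}(x) = x (x - N - 1) χ_H(x - 1)`: the spectrum of
`K₁ ∨ H` is `{0, N + 1}` together with the spectrum of `H` shifted by one, less one copy of `1`.
For `H = K₁ ∪ G`, whose spectrum is `{0} ∪ spec G`, this yields
`spec (K₁ ∨ (K₁ ∪ G)) = {0, n + 2} ∪ (spec G + 1)`, and shifting `S_{{i,j},n}^m` by one and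
adding `0` and `n + 2` gives `S_{{i+1,j+1},n+2}^{m+1}`.
-/

open Matrix

section Adjacency

variable {α β : Type*} (G : SimpleGraph α) (H : SimpleGraph β) {a a' : α} {b b' : β}

@[simp] lemma graphUnion_adj_inl_inl : (graphUnion G H).Adj (.inl a) (.inl a') ↔ G.Adj a a' := by
  simpa [graphUnion, G.adj_comm a'] using fun h => G.ne_of_adj h

@[simp] lemma graphUnion_adj_inr_inr : (graphUnion G H).Adj (.inr b) (.inr b') ↔ H.Adj b b' := by
  simpa [graphUnion, H.adj_comm b'] using fun h => H.ne_of_adj h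

@[simp] lemma graphUnion_not_adj_inl_inr : ¬ (graphUnion G H).Adj (.inl a) (.inr b) := by
  simp [graphUnion]

@[simp] lemma graphUnion_not_adj_inr_inl : ¬ (graphUnion G H).Adj (.inr b) (.inl a) := by
  simp [graphUnion]

@[simp] lemma graphJoin_adj_inl_inl : (graphJoin G H).Adj (.inl a) (.inl a') ↔ G.Adj a a' := by
  simpa [graphJoin, G.adj_comm a'] using fun h => G.ne_of_adj h

@[simp] lemma graphJoin_adj_inr_inr : (graphJoin G H).Adj (.inr b) (.inr b') ↔ H.Adj b b' := by
  simpa [graphJoin, H.adj_comm b'] using fun h => H.ne_of_adj h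

@[simp] lemma graphJoin_adj_inl_inr : (graphJoin G H).Adj (.inl a) (.inr b) := by
  simp [graphJoin]

@[simp] lemma graphJoin_adj_inr_inl : (graphJoin G H).Adj (.inr b) (.inl a) := by
  simp [graphJoin]

end Adjacency

section Degree

variable {α β : Type*} [Fintype α] [Fintype β] (G : SimpleGraph α) (H : SimpleGraph β)

lemma degree_graphUnion_inl [DecidableRel G.Adj] [DecidableRel (graphUnion G H).Adj] (a : α) :
    (graphUnion G H).degree (.inl a) = G.degree a := by
  rw [← card_neighborFinset_eq_degree, ← card_neighborFinset_eq_degree,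
    show (graphUnion G H).neighborFinset (.inl a) = (G.neighborFinset a).disjSum ∅ by
      ext (_ | _) <;> simp, Finset.card_disjSum, Finset.card_empty, add_zero]

lemma degree_graphUnion_inr [DecidableRel H.Adj] [DecidableRel (graphUnion G H).Adj] (b : β) :
    (graphUnion G H).degree (.inr b) = H.degree b := by
  rw [← card_neighborFinset_eq_degree, ← card_neighborFinset_eq_degree,
    show (graphUnion G H).neighborFinset (.inr b) = (∅ : Finset α).disjSum (H.neighborFinset b) by
      ext (_ | _) <;> simp, Finset.card_disjSum, Finset.card_empty, zero_add]

lemma degree_graphJoin_inl [DecidableRel G.Adj] [DecidableRel (graphJoin G H).Adj] (a : α) :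
    (graphJoin G H).degree (.inl a) = G.degree a + Fintype.card β := by
  rw [← card_neighborFinset_eq_degree, ← card_neighborFinset_eq_degree,
    show (graphJoin G H).neighborFinset (.inl a) = (G.neighborFinset a).disjSum Finset.univ by
      ext (_ | _) <;> simp, Finset.card_disjSum, Finset.card_univ]

lemma degree_graphJoin_inr [DecidableRel H.Adj] [DecidableRel (graphJoin G H).Adj] (b : β) :
    (graphJoin G H).degree (.inr b) = H.degree b + Fintype.card α := by
  rw [← card_neighborFinset_eq_degree, ← card_neighborFinset_eq_degree,
    show (graphJoin G H).neighborFinset (.inr b) = Finset.univ.disjSum (H.neighborFinset b) by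
      ext (_ | _) <;> simp, Finset.card_disjSum, Finset.card_univ, add_comm]

end Degree

section Laplacian

variable {α β : Type*} [Fintype α] [Fintype β] [DecidableEq α] [DecidableEq β]
  (G : SimpleGraph α) (H : SimpleGraph β) [DecidableRel G.Adj] [DecidableRel H.Adj]
  (R : Type*) [Ring R]

lemma lapMatrix_graphUnion [DecidableRel (graphUnion G H).Adj] :
    (graphUnion G H).lapMatrix R = fromBlocks (G.lapMatrix R) 0 0 (H.lapMatrix R) := by
  ext (_ | _) (_ | _) <;>
    simp [lapMatrix, degMatrix, diagonal_apply, degree_graphUnion_inl, degree_graphUnion_inr]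

lemma lapMatrix_graphJoin [DecidableRel (graphJoin G H).Adj] :
    (graphJoin G H).lapMatrix R =
      fromBlocks (G.lapMatrix R + scalar α (Fintype.card β : R)) (of fun _ _ => -1)
        (of fun _ _ => -1) (H.lapMatrix R + scalar β (Fintype.card α : R)) := by
  ext (_ | _) (_ | _) <;>
    simp [lapMatrix, degMatrix, diagonal_apply, degree_graphJoin_inl, degree_graphJoin_inr,
      Matrix.natCast_apply] <;> split_ifs <;> abel

end Laplacian

section Determinant

variable {ι β S : Type*} [Unique ι] [Fintype β] [DecidableEq ι] [DecidableEq β] [CommRing S]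

lemma det_fromBlocks_ones_mul (A : Matrix ι ι S) (B : Matrix β β S) (c : S)
    (hB : B *ᵥ (fun _ => 1) = fun _ => c) :
    (fromBlocks A (of fun _ _ => 1) (of fun _ _ => 1) B).det * c =
      (A default default * c - Fintype.card β) * B.det := by
  -- Right multiplication by `P` clears the lower-left block, since the rows of `B` sum to `c`.
  set P := fromBlocks (of fun _ _ : ι => c) 0 (of fun (_ : β) (_ : ι) => -1) (1 : Matrix β β S)
  have hP : P.det = c := by
    rw [det_fromBlocks_zero₁₂, det_unique, det_one, mul_one, of_apply]
  have hB' (b : β) : ∑ k, B b k = c := by simpa [mulVec, dotProduct] using congrFun hB b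
  calc _ = (fromBlocks A (of fun _ _ => 1) (of fun _ _ => 1) B * P).det := by rw [det_mul, hP]
    _ = (fromBlocks (of fun _ _ => A default default * c - Fintype.card β) (of fun _ _ => 1) 0
          B).det := by
      rw [fromBlocks_multiply]
      congr 1
      rw [fromBlocks_inj]
      refine ⟨?_, ?_, ?_, ?_⟩ <;> ext i j
      · simp [mul_apply, Subsingleton.elim i default, Subsingleton.elim j default, sub_eq_add_neg]
      · simp
      · simp [mul_apply, hB']
      · simp
    _ = _ := by rw [det_fromBlocks_zero₂₁, det_unique, of_apply]

end Determinant

section Charpoly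

variable {α β R : Type*} [Fintype α] [Fintype β] [DecidableEq α] [DecidableEq β] [CommRing R]

lemma charmatrix_mulVec_const {M : Matrix β β R} {r : R} (hM : M *ᵥ (fun _ => 1) = fun _ => r) :
    charmatrix M *ᵥ (fun _ => 1) = fun _ => X - C r := by
  have hM' (b : β) : ∑ k, M b k = r := by simpa [mulVec, dotProduct] using congrFun hM b
  ext1 b
  simp [charmatrix, mulVec, dotProduct, diagonal_apply, ← map_sum, hM']

lemma charpoly_lapMatrix_graphUnion (G : SimpleGraph α) (H : SimpleGraph β) [DecidableRel G.Adj]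
    [DecidableRel H.Adj] [DecidableRel (graphUnion G H).Adj] :
    ((graphUnion G H).lapMatrix R).charpoly =
      (G.lapMatrix R).charpoly * (H.lapMatrix R).charpoly := by
  rw [lapMatrix_graphUnion, charpoly_fromBlocks_zero₁₂]

lemma lapMatrix_K1 [DecidableRel K1.Adj] : K1.lapMatrix R = 0 := by
  ext i j
  simp [lapMatrix, degMatrix, Subsingleton.elim i j]

lemma charpoly_lapMatrix_K1 [DecidableRel K1.Adj] : (K1.lapMatrix R).charpoly = X := by
  rw [lapMatrix_K1, charpoly_zero, Fintype.card_fin, pow_one]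

lemma charpoly_lapMatrix_graphJoin_K1 (H : SimpleGraph β) [DecidableRel H.Adj]
    [DecidableRel (graphJoin K1 H).Adj] :
    ((graphJoin K1 H).lapMatrix R).charpoly * (X - 1) =
      X * (X - C ((Fintype.card β : R) + 1)) * (H.lapMatrix R).charpoly.comp (X - 1) := by
  classical
  have hsum : (H.lapMatrix R + scalar β 1) *ᵥ (fun _ => 1) = fun _ => 1 := by
    simp [add_mulVec, lapMatrix_mulVec_const_eq_zero]
  have hsumX : charmatrix (H.lapMatrix R + scalar β 1) *ᵥ (fun _ => 1) = fun _ => X - 1 := by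
    rw [charmatrix_mulVec_const hsum, C_1]
  have hshift : (H.lapMatrix R + scalar β 1).charpoly = (H.lapMatrix R).charpoly.comp (X - 1) := by
    rw [← sub_neg_eq_add, ← map_neg, charpoly_sub_scalar, map_neg, map_one, ← sub_eq_add_neg]
  have h₂₁ : -(of fun (_ : β) (_ : Fin 1) => (-1 : R)).map C = of fun _ _ => 1 := by ext; simp
  have h₁₂ : -(of fun (_ : Fin 1) (_ : β) => (-1 : R)).map C = of fun _ _ => 1 := by ext; simp
  rw [lapMatrix_graphJoin, lapMatrix_K1, zero_add, Fintype.card_fin, Nat.cast_one, charpoly,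
    charmatrix_fromBlocks, h₂₁, h₁₂]
  refine (det_fromBlocks_ones_mul _ _ _ hsumX).trans ?_
  rw [← charpoly, hshift, charmatrix_apply_eq]
  simp only [map_natCast, Matrix.natCast_apply, ↓reduceIte, C_add, map_one]
  ring

end Charpoly

lemma Polynomial.roots_comp_X_sub_C {R : Type*} [CommRing R] [IsDomain R] (p : R[X]) (a : R) :
    (p.comp (X - C a)).roots = p.roots.map (· + a) := by
  simpa [sub_eq_add_neg] using roots_comp_C_mul_X_add_C p 1 (-a) isUnit_one

section Spectrum

variable {α β : Type*} [Fintype α] [Fintype β] [DecidableEq α] [DecidableEq β]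

lemma lapSpec_eq_roots (G : SimpleGraph α) [DecidableRel G.Adj] :
    lapSpec G = (G.lapMatrix ℝ).charpoly.roots := by
  unfold lapSpec
  congr!

lemma lapSpec_graphUnion (G : SimpleGraph α) (H : SimpleGraph β) :
    lapSpec (graphUnion G H) = lapSpec G + lapSpec H := by
  classical
  rw [lapSpec_eq_roots, lapSpec_eq_roots, lapSpec_eq_roots, charpoly_lapMatrix_graphUnion,
    roots_mul ((charpoly_monic _).mul (charpoly_monic _)).ne_zero]

lemma lapSpec_K1 : lapSpec K1 = {0} := by
  classical
  rw [lapSpec_eq_roots, charpoly_lapMatrix_K1, roots_X]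

lemma lapSpec_graphJoin_K1 (H : SimpleGraph β) :
    1 ::ₘ lapSpec (graphJoin K1 H) =
      0 ::ₘ ((Fintype.card β : ℝ) + 1) ::ₘ (lapSpec H).map (· + 1) := by
  classical
  have h := congrArg roots (charpoly_lapMatrix_graphJoin_K1 (R := ℝ) H)
  have hquad : (X * (X - C ((Fintype.card β : ℝ) + 1))).Monic := monic_X.mul (monic_X_sub_C _)
  have hshift := (charpoly_monic (H.lapMatrix ℝ)).comp_X_sub_C 1
  rw [← C_1, roots_mul ((charpoly_monic _).mul (monic_X_sub_C 1)).ne_zero,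
    roots_mul (hquad.mul hshift).ne_zero, roots_mul hquad.ne_zero, roots_X, roots_X_sub_C,
    roots_X_sub_C, roots_comp_X_sub_C, add_comm, Multiset.singleton_add, Multiset.singleton_add,
    Multiset.cons_add, Multiset.singleton_add] at h
  rwa [lapSpec_eq_roots, lapSpec_eq_roots]

lemma lapSpec_graphJoin_K1_graphUnion_K1 (G : SimpleGraph α) :
    lapSpec (graphJoin K1 (graphUnion K1 G)) =
      0 ::ₘ ((Fintype.card α : ℝ) + 2) ::ₘ (lapSpec G).map (· + 1) := by
  have h := lapSpec_graphJoin_K1 (graphUnion K1 G)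
  rw [lapSpec_graphUnion, lapSpec_K1, Multiset.singleton_add, Multiset.map_cons, zero_add,
    Fintype.card_sum, Fintype.card_fin] at h
  rw [← Multiset.cons_inj_right 1, h, Multiset.cons_swap _ 1, Multiset.cons_swap 0 1]
  congr 3
  push_cast
  ring

end Spectrum

lemma Multiset.range_add_one_eq_cons_map (k : ℕ) :
    Multiset.range (k + 1) = 0 ::ₘ (Multiset.range k).map (· + 1) := by
  rw [add_comm, Multiset.range_add]
  simp [add_comm]

lemma Sdouble_add_one (i j n m : ℕ) (hi : i ≤ n) (hj : j ≤ n) :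
    Sdouble (i + 1) (j + 1) (n + 2) (m + 1) =
      0 ::ₘ ((n : ℝ) + 2) ::ₘ (Sdouble i j n m).map (· + 1) := by
  have hsucc : Function.Injective (· + 1 : ℕ → ℕ) := add_left_injective 1
  have hnat : ((Multiset.range (n + 2 + 1)).erase (i + 1)).erase (j + 1) =
      0 ::ₘ (n + 2) ::ₘ (((Multiset.range (n + 1)).erase i).erase j).map (· + 1) := by
    rw [Multiset.range_add_one_eq_cons_map, Multiset.range_succ, Multiset.map_cons,
      Multiset.erase_cons_tail _ (by omega), Multiset.erase_cons_tail _ (by omega),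
      Multiset.erase_cons_tail _ (by omega), Multiset.erase_cons_tail _ (by omega),
      Multiset.map_erase _ hsucc, Multiset.map_erase _ hsucc]
  simp only [Sdouble, Finset.range_val, hnat, Multiset.map_cons, Multiset.map_map,
    Function.comp_def, Nat.cast_add, Nat.cast_one, Nat.cast_zero, Nat.cast_ofNat]
  rw [Multiset.cons_swap _ 0, Multiset.cons_swap ((m : ℝ) + 1)]

theorem join_union_construction_general {V : Type*} [Fintype V] [DecidableEq V] (G : SimpleGraph V)
    (n i j m : ℕ) (hcard : Fintype.card V = n) (hij : i < j) (hj : j ≤ n)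
    (hspec : lapSpec G = Sdouble i j n m) :
    lapSpec (graphJoin K1 (graphUnion K1 G)) = Sdouble (i + 1) (j + 1) (n + 2) (m + 1) := by
  rw [lapSpec_graphJoin_K1_graphUnion_K1, hspec, hcard, Sdouble_add_one i j n m (by omega) hj]

/-- If a connected graph `G` of order `n` realizes `S_{{i,j},n}^m`, then the graph
`K₁ ∨ (K₁ ∪ G)` on `n + 2` vertices realizes `S_{{i+1,j+1},n+2}^{m+1}`. -/
theorem join_union_construction {V : Type*} [Fintype V] [DecidableEq V] (G : SimpleGraph V)
    (n i j m : ℕ) (hn : 3 ≤ n) (hcard : Fintype.card V = n) (hG : G.Connected)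
    (hi : 0 < i) (hij : i < j) (hj : j ≤ n) (hm1 : 1 ≤ m) (hmn : m ≤ n)
    (hmi : m ≠ i) (hmj : m ≠ j)
    (hspec : lapSpec G = Sdouble i j n m) :
    lapSpec (graphJoin K1 (graphUnion K1 G)) = Sdouble (i + 1) (j + 1) (n + 2) (m + 1) :=
  join_union_construction_general G n i j m hcard hij hj hspec
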